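/- arXiv:1906.09491 — 3 statements merged into one kernel-verified Lean document; each statement's English description precedes it below -/
import Mathlib

section
/- Let f ∈ 𝔪 be a nonzero polynomial. Then for every e ∈ ℕ, ν_f(p^{e+1}) ≥ p · ν_f(p^e). -/
open Filter

section FrobAux

open MvPolynomial

variable {R : Type*} [CommRing R] (p : ℕ) [ExpChar R p]

/-- For `q = p ^ e` a power of the (exponential) characteristic, the ideal generated by the
`q`-th powers of the elements of a span is the span of the `q`-th powers of the generators. -/
lemma frobeniusPower_span' (S : Set R) (e : ℕ) :
    Ideal.span ((· ^ p ^ e) '' ((Ideal.span S : Ideal R) : Set R)) =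
      Ideal.span ((· ^ p ^ e) '' S) := by
  apply le_antisymm
  · rw [Ideal.span_le]
    rintro _ ⟨x, hx, rfl⟩
    have : ∀ (y : R), y ∈ Ideal.span S → y ^ p ^ e ∈ Ideal.span ((· ^ p ^ e) '' S) := by
      intro y hy
      induction hy using Submodule.span_induction with
      | mem z hz => exact Ideal.subset_span ⟨z, hz, rfl⟩
      | zero =>
          rw [zero_pow (pow_ne_zero e (expChar_pos R p).ne')]
          exact Ideal.zero_mem _
      | add a b ha hb iha ihb =>
          rw [add_pow_expChar_pow]
          exact Ideal.add_mem _ iha ihb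
      | smul r a ha iha =>
          rw [smul_eq_mul, mul_pow]
          exact Ideal.mul_mem_left _ _ iha
    exact this x hx
  · exact Ideal.span_mono (Set.image_mono Ideal.subset_span)

variable {σ : Type*} {K : Type*} [CommRing K]

lemma coeff_pow_expChar [ExpChar K p] (g : MvPolynomial σ K) (d : σ →₀ ℕ) (hp : p ≠ 0) :
    MvPolynomial.coeff (p • d) (g ^ p) = MvPolynomial.coeff d g ^ p := by
  classical
  haveI : ExpChar (MvPolynomial σ K) p :=
    expChar_of_injective_ringHom (MvPolynomial.C_injective σ K) p
  have hg : g ^ p = ∑ v ∈ g.support, monomial (p • v) (MvPolynomial.coeff v g ^ p) := by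
    conv_lhs => rw [← g.support_sum_monomial_coeff]
    rw [sum_pow_char]
    exact Finset.sum_congr rfl fun v _ => monomial_pow
  rw [hg, MvPolynomial.coeff_sum]
  simp_rw [MvPolynomial.coeff_monomial]
  by_cases hd : d ∈ g.support
  · rw [Finset.sum_eq_single d]
    · rw [if_pos rfl]
    · intro b hb hbd
      rw [if_neg]
      intro h
      exact hbd (by
        ext i
        have := DFunLike.congr_fun h i
        simpa using Nat.eq_of_mul_eq_mul_left (Nat.pos_of_ne_zero hp) (by simpa [mul_comm] using this))
    · intro h; exact absurd hd h
  · rw [Finset.sum_eq_zero, MvPolynomial.notMem_support_iff.mp hd, zero_pow hp]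
    intro b hb
    rw [if_neg]
    intro h
    apply hd
    have : b = d := by
      ext i
      have := DFunLike.congr_fun h i
      simpa using Nat.eq_of_mul_eq_mul_left (Nat.pos_of_ne_zero hp) (by simpa [mul_comm] using this)
    rwa [this] at hb

/-- If every monomial of `f` is nonconstant, then every monomial of `f ^ N` has degree `≥ N`. -/
lemma le_sum_of_mem_support_pow (f : MvPolynomial σ K)
    (hf : ∀ d ∈ f.support, d ≠ 0) :
    ∀ (N : ℕ) (d : σ →₀ ℕ), d ∈ (f ^ N).support → N ≤ d.sum fun _ n => n := by
  classical
  intro N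
  induction N with
  | zero => intro d _; exact Nat.zero_le _
  | succ N ih =>
    intro d hd
    rw [pow_succ] at hd
    have := MvPolynomial.support_mul _ _ hd
    obtain ⟨a, ha, b, hb, rfl⟩ := Finset.mem_add.mp this
    have hb0 : b ≠ 0 := hf b hb
    obtain ⟨i, hi⟩ : ∃ i, b i ≠ 0 := by
      by_contra h
      push_neg at h
      exact hb0 (Finsupp.ext h)
    have h1 : 1 ≤ b.sum fun _ n => n := by
      calc 1 ≤ b i := Nat.one_le_iff_ne_zero.mpr hi
      _ ≤ b.sum fun _ n => n :=
          Finset.single_le_sum (fun j _ => Nat.zero_le _) (Finsupp.mem_support_iff.mpr hi)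
    have hsum : (a + b).sum (fun _ n => n) = (a.sum fun _ n => n) + b.sum fun _ n => n :=
      Finsupp.sum_add_index' (fun _ => rfl) (fun _ _ _ => rfl)
    rw [hsum]
    have := ih a ha
    omega

end FrobAux

/-- The `q`-th Frobenius power of an ideal `J`:
the ideal generated by the `q`-th powers of the elements of `J`. -/
def frobeniusPower {R : Type*} [CommSemiring R] (J : Ideal R) (q : ℕ) : Ideal R :=
  Ideal.span ((· ^ q) '' (J : Set R))

section Crit

open MvPolynomial

variable (p : ℕ) {m : ℕ} {K : Type*} [Field K] [CharP K p]

lemma mem_frobeniusPower_iff (hp : p.Prime) (e : ℕ) (g : MvPolynomial (Fin m) K) :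
    g ∈ frobeniusPower
        (Ideal.span (Set.range (MvPolynomial.X : Fin m → MvPolynomial (Fin m) K))) (p ^ e) ↔
      ∀ d ∈ g.support, ∃ i : Fin m, p ^ e ≤ d i := by
  haveI : ExpChar K p := ExpChar.prime hp
  haveI : ExpChar (MvPolynomial (Fin m) K) p :=
    expChar_of_injective_ringHom (MvPolynomial.C_injective (Fin m) K) p
  have h1 : frobeniusPower
      (Ideal.span (Set.range (MvPolynomial.X : Fin m → MvPolynomial (Fin m) K))) (p ^ e) =
      Ideal.span ((fun s => monomial s (1 : K)) ''
        Set.range (fun i : Fin m => Finsupp.single i (p ^ e))) := by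
    rw [frobeniusPower, frobeniusPower_span']
    congr 1
    rw [← Set.range_comp, ← Set.range_comp]
    exact congrArg _ (funext fun i => by
      simp [Function.comp, X_pow_eq_monomial])
  rw [h1, mem_ideal_span_monomial_image]
  constructor
  · intro h d hd
    obtain ⟨si, ⟨i, rfl⟩, hle⟩ := h d hd
    exact ⟨i, Finsupp.single_le_iff.mp hle⟩
  · intro h d hd
    obtain ⟨i, hi⟩ := h d hd
    exact ⟨Finsupp.single i (p ^ e), ⟨i, rfl⟩, Finsupp.single_le_iff.mpr hi⟩

end Crit

/-- `ν_f(p^e)`, the largest `n` with `f ^ n ∉ 𝔪^{[p^e]}`, where `𝔪` is the ideal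
generated by the variables.  (The defining set is finite and contains `0`.) -/
noncomputable def nu (p : ℕ) {m : ℕ} {K : Type*} [Field K]
    (f : MvPolynomial (Fin m) K) (e : ℕ) : ℕ :=
  sSup {n : ℕ |
    f ^ n ∉ frobeniusPower
      (Ideal.span (Set.range (MvPolynomial.X : Fin m → MvPolynomial (Fin m) K))) (p ^ e)}

/-- For every `e`, `ν_f(p^{e+1}) ≥ p · ν_f(p^e)`. -/
theorem nu_succ_ge_p_mul_nu
    (p : ℕ) (hp : p.Prime) (K : Type*) [Field K] [Fintype K] [CharP K p]
    (m : ℕ) (f : MvPolynomial (Fin m) K) (hf0 : f ≠ 0)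
    (hfm : f ∈ Ideal.span (Set.range (MvPolynomial.X : Fin m → MvPolynomial (Fin m) K))) :
    ∀ e : ℕ, p * nu p f e ≤ nu p f (e + 1) := by
  classical
  haveI : ExpChar K p := ExpChar.prime hp
  intro e
  set S : ℕ → Set ℕ := fun e' => {n : ℕ |
    f ^ n ∉ frobeniusPower
      (Ideal.span (Set.range (MvPolynomial.X : Fin m → MvPolynomial (Fin m) K))) (p ^ e')}
    with hS
  -- every monomial of `f` is nonconstant
  have hfsupp : ∀ d ∈ f.support, d ≠ 0 := by
    intro d hd
    rw [← Set.image_univ] at hfm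
    obtain ⟨i, _, hi⟩ := MvPolynomial.mem_ideal_span_X_image.mp hfm d hd
    intro h0
    rw [h0] at hi
    exact hi rfl
  -- `0 ∈ S e'` for each `e'`
  have hne : ∀ e', (S e').Nonempty := by
    intro e'
    refine ⟨0, ?_⟩
    simp only [hS, Set.mem_setOf_eq, pow_zero]
    rw [mem_frobeniusPower_iff p hp]
    intro h
    have h1 : (0 : Fin m →₀ ℕ) ∈ (1 : MvPolynomial (Fin m) K).support := by
      rw [MvPolynomial.mem_support_iff]
      simp
    obtain ⟨i, hi⟩ := h 0 h1
    simp only [Finsupp.coe_zero, Pi.zero_apply, Nat.le_zero] at hi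
    exact pow_ne_zero e' hp.ne_zero hi
  -- boundedness
  have hbdd : ∀ e', BddAbove (S e') := by
    intro e'
    refine ⟨m * (p ^ e' - 1), fun n hn => ?_⟩
    by_contra hlt
    push_neg at hlt
    apply hn
    rw [mem_frobeniusPower_iff p hp]
    intro d hd
    by_contra hno
    push_neg at hno
    have hdsum : n ≤ d.sum fun _ k => k := le_sum_of_mem_support_pow f hfsupp n d hd
    have hle : (d.sum fun _ k => k) ≤ m * (p ^ e' - 1) := by
      have : (d.sum fun _ k => k) = ∑ i ∈ d.support, d i := rfl
      rw [this]
      calc ∑ i ∈ d.support, d i ≤ ∑ i : Fin m, d i :=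
            Finset.sum_le_sum_of_subset (Finset.subset_univ _)
        _ ≤ ∑ _i : Fin m, (p ^ e' - 1) :=
            Finset.sum_le_sum fun i _ => Nat.le_sub_one_of_lt (hno i)
        _ = m * (p ^ e' - 1) := by
            rw [Finset.sum_const, Finset.card_univ, Fintype.card_fin, smul_eq_mul]
    omega
  have hmem : nu p f e ∈ S e := Nat.sSup_mem (hne e) (hbdd e)
  -- the key step
  have hkey : p * nu p f e ∈ S (e + 1) := by
    simp only [hS, Set.mem_setOf_eq] at hmem ⊢
    rw [mem_frobeniusPower_iff p hp] at hmem
    push_neg at hmem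
    obtain ⟨d, hd, hdlt⟩ := hmem
    intro hcon
    rw [mem_frobeniusPower_iff p hp] at hcon
    have hpd : p • d ∈ (f ^ (p * nu p f e)).support := by
      rw [mul_comm, pow_mul, MvPolynomial.mem_support_iff,
        coeff_pow_expChar p _ _ hp.ne_zero]
      exact pow_ne_zero p (MvPolynomial.mem_support_iff.mp hd)
    obtain ⟨i, hi⟩ := hcon (p • d) hpd
    have : p ^ (e + 1) ≤ p * d i := by simpa using hi
    rw [pow_succ, mul_comm (p ^ e) p] at this
    exact absurd (Nat.le_of_mul_le_mul_left this hp.pos) (hdlt i).not_ge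
  exact le_csSup (hbdd (e + 1)) hkey
end

section
/- Let I and J be ideals of R with J proper and I contained in the radical of J. Then for every e ∈ ℕ, ν_I^J(p^{e+1}) ≥ p · ν_I^J(p^e). -/
/-!
Over a perfect field `K`, the polynomial ring `R = K[x]` has a Frobenius splitting `φ`: the additive
map sending `f` to the polynomial whose coefficient at `x^β` is the `p`-th root of the coefficient
of `f` at `x^(pβ)`. It satisfies `φ (b ^ p * r) = b * φ r` and `φ 1 = 1`, so it maps `J^{[p]}` into
`J`; hence `a ^ p ∈ J^{[p]}` forces `a ∈ J`. Now if `a ∈ I^n \ J^{[p^e]}` with `n = ν(p^e)`, then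
`a ^ p ∈ I^(pn)` but `a ^ p ∉ (J^{[p^e]})^{[p]} ⊇ J^{[p^(e+1)]}`, so `pn ≤ ν(p^(e+1))`; the sets
defining `ν` are bounded because `R` is Noetherian and `I ⊆ √J = √J^{[q]}`.
-/

open Filter

/-- `ν_I^J(p^e)`, the largest `n` with `I ^ n ⊄ J^{[p^e]}` (and `0` if there is no
such `n`). -/
noncomputable def nuIJ (p : ℕ) {R : Type*} [CommSemiring R] (I J : Ideal R) (e : ℕ) : ℕ :=
  sSup {n : ℕ | ¬ I ^ n ≤ frobeniusPower J (p ^ e)}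

section FrobeniusPower

variable {R : Type*} [CommSemiring R]

theorem pow_mem_frobeniusPower {J : Ideal R} {a : R} (ha : a ∈ J) (q : ℕ) :
    a ^ q ∈ frobeniusPower J q :=
  Ideal.subset_span ⟨a, ha, rfl⟩

theorem frobeniusPower_mul_le (J : Ideal R) (q r : ℕ) :
    frobeniusPower J (q * r) ≤ frobeniusPower (frobeniusPower J q) r := by
  refine Ideal.span_le.mpr ?_
  rintro _ ⟨a, ha, rfl⟩
  show a ^ (q * r) ∈ _
  rw [pow_mul]
  exact pow_mem_frobeniusPower (pow_mem_frobeniusPower ha q) r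

theorem radical_le_radical_frobeniusPower (J : Ideal R) (q : ℕ) :
    J.radical ≤ (frobeniusPower J q).radical :=
  Ideal.radical_le_radical_iff.mpr fun _ ha => ⟨q, pow_mem_frobeniusPower ha q⟩

theorem bddAbove_setOf_not_pow_le [IsNoetherianRing R] {I Q : Ideal R} (hI : I ≤ Q.radical) :
    BddAbove {n : ℕ | ¬ I ^ n ≤ Q} := by
  obtain ⟨k, hk⟩ := Ideal.exists_pow_le_of_le_radical_of_fg hI (IsNoetherian.noetherian I)
  exact ⟨k, fun n hn => not_lt.mp fun hkn => hn ((Ideal.pow_le_pow_right hkn.le).trans hk)⟩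

end FrobeniusPower

namespace MvPolynomial

variable {σ K : Type*} [CommSemiring K] (p : ℕ) [ExpChar K p] [PerfectRing K p]

noncomputable def frobeniusSplitting : MvPolynomial σ K →+ MvPolynomial σ K :=
  AddMonoidAlgebra.coeffAddEquiv.symm.toAddMonoidHom.comp <|
    (Finsupp.mapRange.addMonoidHom (frobeniusEquiv K p).symm.toAddMonoidHom).comp <|
      (Finsupp.comapDomain.addMonoidHom (nsmul_right_injective (expChar_ne_zero K p))).comp
        AddMonoidAlgebra.coeffAddEquiv.toAddMonoidHom

theorem coeff_frobeniusSplitting (f : MvPolynomial σ K) (β : σ →₀ ℕ) :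
    coeff β (frobeniusSplitting p f) = (frobeniusEquiv K p).symm (coeff (p • β) f) :=
  rfl

theorem frobeniusSplitting_one : frobeniusSplitting p (1 : MvPolynomial σ K) = 1 := by
  classical
  ext β
  simp only [coeff_frobeniusSplitting, coeff_one, eq_comm (a := (0 : σ →₀ ℕ)),
    nsmul_eq_zero_iff_right (expChar_ne_zero K p)]
  split_ifs <;> simp

theorem frobeniusSplitting_monomial_mul (γ : σ →₀ ℕ) (c : K) (r : MvPolynomial σ K) :
    frobeniusSplitting p (monomial (p • γ) c * r) =
      monomial γ ((frobeniusEquiv K p).symm c) * frobeniusSplitting p r := by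
  classical
  have hp := expChar_ne_zero K p
  ext β
  have hle : p • γ ≤ p • β ↔ γ ≤ β := by
    simp only [Finsupp.le_def, Finsupp.smul_apply, smul_eq_mul,
      Nat.mul_le_mul_left_iff (Nat.pos_of_ne_zero hp)]
  have hsub : p • β - p • γ = p • (β - γ) := by ext i; simp [Nat.mul_sub]
  simp only [coeff_frobeniusSplitting, coeff_monomial_mul', hle, hsub]
  split_ifs <;> simp

theorem frobeniusSplitting_pow_mul (b r : MvPolynomial σ K) :
    frobeniusSplitting p (b ^ p * r) = b * frobeniusSplitting p r := by
  induction b using MvPolynomial.induction_on' with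
  | monomial γ c =>
    rw [monomial_pow, frobeniusSplitting_monomial_mul, frobeniusEquiv_symm_pow]
  | add b₁ b₂ h₁ h₂ =>
    rw [add_pow_expChar, add_mul, map_add, h₁, h₂, add_mul]

theorem frobeniusSplitting_pow (a : MvPolynomial σ K) : frobeniusSplitting p (a ^ p) = a := by
  simpa [frobeniusSplitting_one] using frobeniusSplitting_pow_mul p a 1

theorem mem_of_pow_mem_frobeniusPower {J : Ideal (MvPolynomial σ K)} {a : MvPolynomial σ K}
    (h : a ^ p ∈ frobeniusPower J p) : a ∈ J := by
  suffices ∀ g ∈ frobeniusPower J p, ∀ r, frobeniusSplitting p (r * g) ∈ J by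
    simpa [frobeniusSplitting_pow] using this _ h 1
  intro g hg
  induction hg using Submodule.span_induction with
  | mem _ hx =>
    obtain ⟨f, hf, rfl⟩ := hx
    intro r
    rw [mul_comm, frobeniusSplitting_pow_mul]
    exact J.mul_mem_right _ hf
  | zero => simp
  | add x y _ _ hx hy =>
    intro r
    rw [mul_add, map_add]
    exact add_mem (hx r) (hy r)
  | smul c x _ hx =>
    intro r
    rw [smul_eq_mul, ← mul_assoc]
    exact hx (r * c)

theorem not_pow_mul_le_frobeniusPower {I Q : Ideal (MvPolynomial σ K)} {n : ℕ}
    (h : ¬ I ^ n ≤ Q) : ¬ I ^ (p * n) ≤ frobeniusPower Q p := by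
  obtain ⟨a, haI, haQ⟩ := SetLike.not_le_iff_exists.mp h
  refine fun hle => haQ (mem_of_pow_mem_frobeniusPower p (hle ?_))
  rw [mul_comm, pow_mul]
  exact Ideal.pow_mem_pow haI p

end MvPolynomial

theorem nuIJ_succ_ge_p_mul_nuIJ_general
    (p : ℕ) (hp : p.Prime) (K : Type*) [Field K] [Fintype K] [CharP K p]
    (m : ℕ) (I J : Ideal (MvPolynomial (Fin m) K))
    (hIJ : I ≤ J.radical) :
    ∀ e : ℕ, p * nuIJ p I J e ≤ nuIJ p I J (e + 1) := by
  have : Fact p.Prime := ⟨hp⟩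
  intro e
  have hbdd (e' : ℕ) : BddAbove {n : ℕ | ¬ I ^ n ≤ frobeniusPower J (p ^ e')} :=
    bddAbove_setOf_not_pow_le (hIJ.trans (radical_le_radical_frobeniusPower J _))
  rcases Set.eq_empty_or_nonempty {n : ℕ | ¬ I ^ n ≤ frobeniusPower J (p ^ e)} with hempty | hne
  · simp [nuIJ, hempty]
  · refine le_csSup (hbdd (e + 1)) fun hle => ?_
    refine MvPolynomial.not_pow_mul_le_frobeniusPower p (Nat.sSup_mem hne (hbdd e)) ?_
    rw [pow_succ] at hle
    exact hle.trans (frobeniusPower_mul_le J _ _)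

/-- For ideals `I ⊆ √J` with `J` proper, `ν_I^J(p^{e+1}) ≥ p · ν_I^J(p^e)` for every `e`. -/
theorem nuIJ_succ_ge_p_mul_nuIJ
    (p : ℕ) (hp : p.Prime) (K : Type*) [Field K] [Fintype K] [CharP K p]
    (m : ℕ) (I J : Ideal (MvPolynomial (Fin m) K))
    (hJ : J ≠ ⊤) (hIJ : I ≤ J.radical) :
    ∀ e : ℕ, p * nuIJ p I J e ≤ nuIJ p I J (e + 1) :=
  nuIJ_succ_ge_p_mul_nuIJ_general p hp K m I J hIJ
end

section
/- For all ideals A and B of R and every e ∈ ℕ, the Frobenius power commutes with intersection: (A ∩ B)^{[p^e]} = A^{[p^e]} ∩ B^{[p^e]}. -/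
/-!
Write `q = p ^ e`. Over a perfect ring of exponential characteristic `p`, every polynomial
decomposes as `f = ∑ v, f_v ^ q * X ^ v`, the sum running over the exponents `v` with all entries
`< q`: the component `f_v` (`frobeniusComponent`) collects the `q`-th roots of the coefficients
of `f` at the exponents `q • n + v`. Each `f ↦ f_v` is additive with `(g ^ q * f)_v = g * f_v`,
so it maps `J^[q]` into `J`; conversely the decomposition shows that `f ∈ J^[q]` as soon as
all `f_v ∈ J`. Hence `f ∈ J^[q]` iff every component of `f` lies in `J`, a condition that
commutes with intersections.
-/

section Frobenius

variable {R : Type*} [CommSemiring R] (p : ℕ) [ExpChar R p] [PerfectRing R p] (e : ℕ)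

theorem iterateFrobeniusEquiv_symm_pow (x : R) :
    (iterateFrobeniusEquiv R p e).symm x ^ p ^ e = x :=
  (iterateFrobeniusEquiv R p e).apply_symm_apply x

theorem iterateFrobeniusEquiv_symm_apply_pow (x : R) :
    (iterateFrobeniusEquiv R p e).symm (x ^ p ^ e) = x :=
  (iterateFrobeniusEquiv R p e).symm_apply_apply x

end Frobenius

namespace Finsupp

variable {σ : Type*} {q : ℕ}

theorem smul_add_injective (hq : q ≠ 0) (v : σ →₀ ℕ) :
    Function.Injective fun n : σ →₀ ℕ => q • n + v :=
  (add_left_injective v).comp (smul_right_injective _ hq)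

theorem exists_smul_add_eq (hq : 0 < q) (u : σ →₀ ℕ) :
    ∃ n v : σ →₀ ℕ, (∀ i, v i < q) ∧ q • n + v = u :=
  ⟨u.mapRange (· / q) (Nat.zero_div q), u.mapRange (· % q) (Nat.zero_mod q),
    fun i => Nat.mod_lt _ hq, by ext i; exact Nat.div_add_mod (u i) q⟩

theorem smul_le_smul_add_iff {v : σ →₀ ℕ} (hv : ∀ i, v i < q) {s n : σ →₀ ℕ} :
    q • s ≤ q • n + v ↔ s ≤ n := by
  simp only [le_def, coe_add, coe_smul, Pi.add_apply, Pi.smul_apply, smul_eq_mul]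
  refine forall_congr' fun i => ⟨fun h => ?_, fun h => ?_⟩
  · by_contra! h'
    nlinarith [hv i]
  · nlinarith

theorem smul_add_eq_iff {v w : σ →₀ ℕ} (hw : ∀ i, w i < q) {n : σ →₀ ℕ} :
    q • n + v = w ↔ n = 0 ∧ v = w := by
  refine ⟨fun h => ?_, by rintro ⟨rfl, rfl⟩; simp⟩
  have hn : n = 0 := by
    rw [← nonpos_iff_eq_zero, ← smul_le_smul_add_iff hw, smul_zero, zero_add, ← h]
    exact le_self_add
  subst hn
  simpa using h

end Finsupp

namespace MvPolynomial

variable {σ R : Type*} [CommSemiring R]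

section Residues

variable [Fintype σ] [DecidableEq σ]

noncomputable def residueExponents (q : ℕ) : Finset (σ →₀ ℕ) :=
  (Fintype.piFinset fun _ => Finset.range q).map Finsupp.equivFunOnFinite.symm.toEmbedding

theorem mem_residueExponents {q : ℕ} {v : σ →₀ ℕ} : v ∈ residueExponents q ↔ ∀ i, v i < q := by
  simp [residueExponents, Finset.mem_map_equiv]

end Residues

variable (p : ℕ) [ExpChar R p] [PerfectRing R p] (e : ℕ)

noncomputable def frobeniusComponent (v : σ →₀ ℕ) : MvPolynomial σ R →+ MvPolynomial σ R :=
  AddMonoidAlgebra.coeffAddEquiv.symm.toAddMonoidHom.comp <|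
    (Finsupp.mapRange.addMonoidHom (iterateFrobeniusEquiv R p e).symm.toAddMonoidHom).comp <|
      (Finsupp.comapDomain.addMonoidHom
        (Finsupp.smul_add_injective (expChar_pow_pos R p e).ne' v)).comp
        AddMonoidAlgebra.coeffAddEquiv.toAddMonoidHom

variable {p e}

theorem coeff_frobeniusComponent (v n : σ →₀ ℕ) (f : MvPolynomial σ R) :
    coeff n (frobeniusComponent p e v f) =
      (iterateFrobeniusEquiv R p e).symm (coeff (p ^ e • n + v) f) := rfl

theorem frobeniusComponent_monomial_one [DecidableEq σ] {v w : σ →₀ ℕ} (hw : ∀ i, w i < p ^ e) :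
    frobeniusComponent p e v (monomial w (1 : R)) = if v = w then 1 else 0 := by
  ext n
  simp only [coeff_frobeniusComponent, coeff_monomial, eq_comm (a := w),
    Finsupp.smul_add_eq_iff hw]
  by_cases hn : n = 0 <;> by_cases hvw : v = w <;> simp [hn, hvw, coeff_one, @eq_comm _ 0 n]

theorem frobeniusComponent_pow_mul {v : σ →₀ ℕ} (hv : ∀ i, v i < p ^ e)
    (g f : MvPolynomial σ R) :
    frobeniusComponent p e v (g ^ p ^ e * f) = g * frobeniusComponent p e v f := by
  induction g using MvPolynomial.induction_on' with
  | monomial s c =>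
    ext n
    rw [coeff_frobeniusComponent, monomial_pow, coeff_monomial_mul', coeff_monomial_mul',
      coeff_frobeniusComponent]
    by_cases h : s ≤ n
    · rw [if_pos ((Finsupp.smul_le_smul_add_iff hv).2 h), if_pos h]
      obtain ⟨t, rfl⟩ := exists_add_of_le h
      rw [smul_add, add_assoc, add_tsub_cancel_left, add_tsub_cancel_left, map_mul,
        iterateFrobeniusEquiv_symm_apply_pow]
    · rw [if_neg (mt (Finsupp.smul_le_smul_add_iff hv).1 h), if_neg h, map_zero]
  | add g₁ g₂ h₁ h₂ => rw [add_pow_expChar_pow, add_mul, map_add, h₁, h₂, add_mul]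

theorem sum_frobeniusComponent_pow_mul_monomial [Fintype σ] [DecidableEq σ]
    (f : MvPolynomial σ R) :
    ∑ v ∈ residueExponents (p ^ e), frobeniusComponent p e v f ^ p ^ e * monomial v 1 = f := by
  induction f using MvPolynomial.induction_on' with
  | monomial u c =>
    obtain ⟨n, w, hw, rfl⟩ := Finsupp.exists_smul_add_eq (expChar_pow_pos R p e) u
    have hmonomial : monomial (p ^ e • n + w) c =
        monomial n ((iterateFrobeniusEquiv R p e).symm c) ^ p ^ e * monomial w 1 := by
      rw [monomial_pow, monomial_mul, iterateFrobeniusEquiv_symm_pow, mul_one]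
    rw [hmonomial, Finset.sum_eq_single_of_mem w (mem_residueExponents.2 hw)]
    · rw [frobeniusComponent_pow_mul hw, frobeniusComponent_monomial_one hw, if_pos rfl,
        mul_one]
    · intro v hv hvw
      rw [frobeniusComponent_pow_mul (mem_residueExponents.1 hv),
        frobeniusComponent_monomial_one hw, if_neg hvw, mul_zero,
        zero_pow (expChar_pow_pos R p e).ne', zero_mul]
  | add f g hf hg =>
    simp only [map_add, add_pow_expChar_pow, add_mul, Finset.sum_add_distrib, hf, hg]

theorem frobeniusComponent_mem_of_mem_frobeniusPower {J : Ideal (MvPolynomial σ R)}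
    {v : σ →₀ ℕ} (hv : ∀ i, v i < p ^ e) {f : MvPolynomial σ R}
    (hf : f ∈ frobeniusPower J (p ^ e)) : frobeniusComponent p e v f ∈ J := by
  -- strengthened so that the span induction goes through multiplication by arbitrary `a`
  suffices ∀ a, frobeniusComponent p e v (a * f) ∈ J by simpa using this 1
  induction hf using Submodule.span_induction with
  | mem x hx =>
    obtain ⟨j, hj, rfl⟩ := hx
    intro a
    rw [mul_comm, frobeniusComponent_pow_mul hv]
    exact J.mul_mem_right _ hj
  | zero => simp
  | add x y _ _ hx hy =>
    intro a
    rw [mul_add, map_add]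
    exact J.add_mem (hx a) (hy a)
  | smul b x _ hx =>
    intro a
    rw [smul_eq_mul, ← mul_assoc]
    exact hx (a * b)

theorem mem_frobeniusPower_iff [Fintype σ] [DecidableEq σ] {J : Ideal (MvPolynomial σ R)}
    {f : MvPolynomial σ R} :
    f ∈ frobeniusPower J (p ^ e) ↔
      ∀ v ∈ residueExponents (p ^ e), frobeniusComponent p e v f ∈ J := by
  refine ⟨fun hf v hv => frobeniusComponent_mem_of_mem_frobeniusPower
    (mem_residueExponents.1 hv) hf, fun h => ?_⟩
  rw [← sum_frobeniusComponent_pow_mul_monomial (p := p) (e := e) f]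
  exact Ideal.sum_mem _ fun v hv => Ideal.mul_mem_right _ _ (Ideal.subset_span ⟨_, h v hv, rfl⟩)

end MvPolynomial

theorem frobeniusPower_inf_general
    (p : ℕ) (K : Type*) [Field K] [Fintype K] [CharP K p]
    (m : ℕ) (A B : Ideal (MvPolynomial (Fin m) K)) (e : ℕ) :
    frobeniusPower (A ⊓ B) (p ^ e) = frobeniusPower A (p ^ e) ⊓ frobeniusPower B (p ^ e) := by
  have : Fact p.Prime := ⟨CharP.char_is_prime K p⟩
  ext f
  simp only [Ideal.mem_inf, MvPolynomial.mem_frobeniusPower_iff (p := p), forall₂_and]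

/-- Frobenius powers commute with intersections of ideals in a polynomial ring over a
finite field of characteristic `p`. -/
theorem frobeniusPower_inf
    (p : ℕ) (hp : p.Prime) (K : Type*) [Field K] [Fintype K] [CharP K p]
    (m : ℕ) (A B : Ideal (MvPolynomial (Fin m) K)) (e : ℕ) :
    frobeniusPower (A ⊓ B) (p ^ e) = frobeniusPower A (p ^ e) ⊓ frobeniusPower B (p ^ e) :=
  frobeniusPower_inf_general p K m A B e
end
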